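/- arXiv:2112.10186 — 9 statements merged into one kernel-verified Lean document; each statement's English description precedes it below -/
import Mathlib

section
/- Let A be a positive bounded linear operator on a complex Hilbert space H, and let K be a nonempty set of unit vectors of H. Define ber(A) = sup_{k ∈ K} |⟨A k, k⟩| and ‖A‖_ber = sup_{k, l ∈ K} |⟨A k, l⟩|. Then ‖A‖_ber = ber(A). -/
open ContinuousLinearMap

noncomputable def berNum {H : Type*} [NormedAddCommGroup H] [InnerProductSpace ℂ H]
    (K : Set H) (T : H →L[ℂ] H) : ℝ :=
  sSup {x : ℝ | ∃ k ∈ K, x = ‖(inner ℂ (T k) k : ℂ)‖}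

noncomputable def berNorm {H : Type*} [NormedAddCommGroup H] [InnerProductSpace ℂ H]
    (K : Set H) (T : H →L[ℂ] H) : ℝ :=
  sSup {x : ℝ | ∃ k ∈ K, ∃ l ∈ K, x = ‖(inner ℂ (T k) l : ℂ)‖}

/-! For a positive operator `A`, `(x, y) ↦ ⟪A x, y⟫` is a semi-inner product, so Cauchy–Schwarz
gives `|⟪A k, l⟫|² ≤ ⟪A k, k⟫ ⟪A l, l⟫ ≤ max (⟪A k, k⟫, ⟪A l, l⟫)²`. Thus every off-diagonal value
`|⟪A k, l⟫|` is dominated by a diagonal one and every diagonal value is an off-diagonal one, which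
forces the two suprema to agree (in `ℝ` this holds even for unbounded sets, where both are `0`). -/

namespace ContinuousLinearMap.IsPositive

variable {𝕜 E : Type*} [RCLike 𝕜] [NormedAddCommGroup E] [InnerProductSpace 𝕜 E]
  {T : E →L[𝕜] E}

abbrev preInnerProductCore (hT : T.IsPositive) : PreInnerProductSpace.Core 𝕜 E where
  inner x y := inner 𝕜 (T x) y
  conj_inner_symm x y := by simp only [inner_conj_symm, hT.inner_left_eq_inner_right]
  re_inner_nonneg := hT.re_inner_nonneg_left
  add_left x y z := by simp only [map_add, inner_add_left]
  smul_left x y r := by simp only [map_smul, inner_smul_left]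

theorem re_inner_self_eq_norm (hT : T.IsPositive) (x : E) :
    RCLike.re (inner 𝕜 (T x) x) = ‖inner 𝕜 (T x) x‖ := by
  simpa using congrArg RCLike.re (RCLike.norm_of_nonneg' (hT.inner_nonneg_left x)).symm

theorem norm_inner_sq_le (hT : T.IsPositive) (x y : E) :
    ‖inner 𝕜 (T x) y‖ ^ 2 ≤ ‖inner 𝕜 (T x) x‖ * ‖inner 𝕜 (T y) y‖ := by
  have hyx : ‖inner 𝕜 (T y) x‖ = ‖inner 𝕜 (T x) y‖ := by
    rw [hT.inner_left_eq_inner_right, norm_inner_symm]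
  calc ‖inner 𝕜 (T x) y‖ ^ 2 = ‖inner 𝕜 (T x) y‖ * ‖inner 𝕜 (T y) x‖ := by rw [sq, hyx]
    _ ≤ RCLike.re (inner 𝕜 (T x) x) * RCLike.re (inner 𝕜 (T y) y) :=
      @InnerProductSpace.Core.inner_mul_inner_self_le 𝕜 E _ _ _ hT.preInnerProductCore x y
    _ = ‖inner 𝕜 (T x) x‖ * ‖inner 𝕜 (T y) y‖ := by
      rw [hT.re_inner_self_eq_norm, hT.re_inner_self_eq_norm]

theorem norm_inner_le_max (hT : T.IsPositive) (x y : E) :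
    ‖inner 𝕜 (T x) y‖ ≤ max ‖inner 𝕜 (T x) x‖ ‖inner 𝕜 (T y) y‖ := by
  refine le_of_pow_le_pow_left₀ two_ne_zero (le_max_of_le_left (norm_nonneg _)) ?_
  calc ‖inner 𝕜 (T x) y‖ ^ 2 ≤ ‖inner 𝕜 (T x) x‖ * ‖inner 𝕜 (T y) y‖ := hT.norm_inner_sq_le x y
    _ ≤ max ‖inner 𝕜 (T x) x‖ ‖inner 𝕜 (T y) y‖ ^ 2 := by
      rw [sq]
      gcongr
      exacts [le_max_left _ _, le_max_right _ _]

end ContinuousLinearMap.IsPositive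

theorem berNorm_eq_berNum_of_positive_general {H : Type*} [NormedAddCommGroup H] [InnerProductSpace ℂ H]
    (A : H →L[ℂ] H) (hA : A.IsPositive) (K : Set H) :
    berNorm K A = berNum K A := by
  refine csSup_eq_csSup_of_forall_exists_le ?_ ?_
  · rintro _ ⟨k, hk, l, hl, rfl⟩
    rcases le_max_iff.mp (hA.norm_inner_le_max k l) with h | h
    exacts [⟨_, ⟨k, hk, rfl⟩, h⟩, ⟨_, ⟨l, hl, rfl⟩, h⟩]
  · rintro _ ⟨k, hk, rfl⟩
    exact ⟨_, ⟨k, hk, k, hk, rfl⟩, le_rfl⟩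

theorem berNorm_eq_berNum_of_positive {H : Type*} [NormedAddCommGroup H] [InnerProductSpace ℂ H] [CompleteSpace H]
    (A : H →L[ℂ] H) (hA : A.IsPositive) (K : Set H) (hK : K.Nonempty) (hK1 : ∀ k ∈ K, ‖k‖ = 1) :
    berNorm K A = berNum K A :=
  berNorm_eq_berNum_of_positive_general A hA K
end

section
/- Let X be a bounded linear operator on a complex Hilbert space H and let K be a nonempty set of unit vectors. With ber(T) = sup_{k∈K} |⟨T k, k⟩| and ‖T‖_ber = sup_{k,l∈K} |⟨T k, l⟩|, one has ‖X*X‖_ber = ber(X*X). -/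
open ContinuousLinearMap

/-!
Writing `T = X* X`, one has `⟨T k, l⟩ = ⟨X k, X l⟩`, so by Cauchy–Schwarz
`|⟨T k, l⟩| ≤ ‖X k‖ ‖X l‖ ≤ max (‖X k‖², ‖X l‖²) = max (|⟨T k, k⟩|, |⟨T l, l⟩|)`:
every off-diagonal value is dominated by a diagonal one, and the two suprema agree.
-/

theorem csSup_pairs_eq_csSup_diag {α β : Type*} [ConditionallyCompleteLinearOrder β]
    (K : Set α) (b : α → α → β)
    (hb : ∀ k ∈ K, ∀ l ∈ K, b k l ≤ b k k ∨ b k l ≤ b l l) :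
    sSup {x | ∃ k ∈ K, ∃ l ∈ K, x = b k l} = sSup {x | ∃ k ∈ K, x = b k k} := by
  apply csSup_eq_csSup_of_forall_exists_le
  · rintro _ ⟨k, hk, l, hl, rfl⟩
    rcases hb k hk l hl with hkk | hll
    · exact ⟨_, ⟨k, hk, rfl⟩, hkk⟩
    · exact ⟨_, ⟨l, hl, rfl⟩, hll⟩
  · rintro _ ⟨k, hk, rfl⟩
    exact ⟨_, ⟨k, hk, k, hk, rfl⟩, le_rfl⟩

theorem norm_inner_le_norm_inner_self_or {𝕜 E : Type*} [RCLike 𝕜] [SeminormedAddCommGroup E]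
    [InnerProductSpace 𝕜 E] (x y : E) :
    ‖(inner 𝕜 x y : 𝕜)‖ ≤ ‖(inner 𝕜 x x : 𝕜)‖ ∨ ‖(inner 𝕜 x y : 𝕜)‖ ≤ ‖(inner 𝕜 y y : 𝕜)‖ := by
  simp only [inner_self_eq_norm_sq_to_K, norm_pow, RCLike.norm_ofReal, abs_norm]
  have hxy := norm_inner_le_norm (𝕜 := 𝕜) x y
  rcases le_total ‖x‖ ‖y‖ with h | h
  · exact Or.inr (hxy.trans (by nlinarith [norm_nonneg x]))
  · exact Or.inl (hxy.trans (by nlinarith [norm_nonneg y]))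

theorem inner_adjoint_mul_self_apply {𝕜 E : Type*} [RCLike 𝕜] [NormedAddCommGroup E]
    [InnerProductSpace 𝕜 E] [CompleteSpace E] (X : E →L[𝕜] E) (k l : E) :
    inner 𝕜 ((adjoint X * X) k) l = inner 𝕜 (X k) (X l) :=
  adjoint_inner_left X l (X k)

theorem berNorm_adjoint_mul_self_general {H : Type*} [NormedAddCommGroup H] [InnerProductSpace ℂ H] [CompleteSpace H]
    (X : H →L[ℂ] H) (K : Set H) :
    berNorm K (adjoint X * X) = berNum K (adjoint X * X) := by
  refine csSup_pairs_eq_csSup_diag K _ fun k _ l _ => ?_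
  simpa only [inner_adjoint_mul_self_apply] using norm_inner_le_norm_inner_self_or (X k) (X l)

theorem berNorm_adjoint_mul_self {H : Type*} [NormedAddCommGroup H] [InnerProductSpace ℂ H] [CompleteSpace H]
    (X : H →L[ℂ] H) (K : Set H) (hK : K.Nonempty) (hK1 : ∀ k ∈ K, ‖k‖ = 1) :
    berNorm K (adjoint X * X) = berNum K (adjoint X * X) :=
  berNorm_adjoint_mul_self_general X K
end

section
/- Let A, B be bounded linear operators on a complex Hilbert space H, K a nonempty set of unit vectors, ber(T) = sup_{k∈K}|⟨T k,k⟩|, ‖T‖_ber = sup_{k,l∈K}|⟨T k,l⟩|. Then ‖A*B + B*A‖_ber ≤ ber(A*A + B*B). -/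
open ContinuousLinearMap

/-! Since `⟪(A*B + B*A) k, l⟫ = ⟪B k, A l⟫ + ⟪A k, B l⟫`, Cauchy–Schwarz and AM-GM bound its modulus
by the average of `‖A k‖² + ‖B k‖² = ⟪(A*A + B*B) k, k⟫` and the same quantity at `l`, both of
which are at most `ber(A*A + B*B)`. -/

theorem norm_inner_add_inner_le {𝕜 E : Type*} [RCLike 𝕜] [NormedAddCommGroup E]
    [InnerProductSpace 𝕜 E] (a b c d : E) :
    ‖inner 𝕜 a b + inner 𝕜 c d‖ ≤ (‖a‖ ^ 2 + ‖b‖ ^ 2 + ‖c‖ ^ 2 + ‖d‖ ^ 2) / 2 :=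
  calc ‖inner 𝕜 a b + inner 𝕜 c d‖ ≤ ‖a‖ * ‖b‖ + ‖c‖ * ‖d‖ :=
        (norm_add_le _ _).trans (add_le_add (norm_inner_le_norm a b) (norm_inner_le_norm c d))
    _ ≤ (‖a‖ ^ 2 + ‖b‖ ^ 2 + ‖c‖ ^ 2 + ‖d‖ ^ 2) / 2 := by
        nlinarith [sq_nonneg (‖a‖ - ‖b‖), sq_nonneg (‖c‖ - ‖d‖)]

section Adjoint

variable {H : Type*} [NormedAddCommGroup H] [InnerProductSpace ℂ H] [CompleteSpace H]

theorem inner_adjoint_mul_add_adjoint_mul_apply (A B C D : H →L[ℂ] H) (k l : H) :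
    inner ℂ ((adjoint A * B + adjoint C * D) k) l = inner ℂ (B k) (A l) + inner ℂ (D k) (C l) := by
  simp only [add_apply, mul_apply_eq_comp, inner_add_left, adjoint_inner_left]

theorem norm_inner_adjoint_mul_self_add_adjoint_mul_self_apply (A B : H →L[ℂ] H) (k : H) :
    ‖inner ℂ ((adjoint A * A + adjoint B * B) k) k‖ = ‖A k‖ ^ 2 + ‖B k‖ ^ 2 := by
  rw [inner_adjoint_mul_add_adjoint_mul_apply, inner_self_eq_norm_sq_to_K,
    inner_self_eq_norm_sq_to_K]
  norm_cast
  exact Real.norm_of_nonneg (by positivity)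

end Adjoint

section Berezin

variable {H : Type*} [NormedAddCommGroup H] [InnerProductSpace ℂ H] {K : Set H}

theorem berNum_nonneg (T : H →L[ℂ] H) : 0 ≤ berNum K T :=
  Real.sSup_nonneg fun _ ⟨_, _, hx⟩ => hx ▸ norm_nonneg _

theorem norm_inner_apply_self_le_berNum (hK : Bornology.IsBounded K) (T : H →L[ℂ] H) {k : H}
    (hk : k ∈ K) : ‖inner ℂ (T k) k‖ ≤ berNum K T := by
  obtain ⟨C, hC⟩ := isBounded_iff_forall_norm_le.1 hK
  refine le_csSup ⟨‖T‖ * C ^ 2, ?_⟩ ⟨k, hk, rfl⟩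
  rintro _ ⟨k', hk', rfl⟩
  calc ‖inner ℂ (T k') k'‖ ≤ ‖T k'‖ * ‖k'‖ := norm_inner_le_norm _ _
    _ ≤ ‖T‖ * ‖k'‖ * ‖k'‖ := by gcongr; exact T.le_opNorm k'
    _ ≤ ‖T‖ * C ^ 2 := by
        rw [mul_assoc, ← sq]
        gcongr
        exact hC k' hk'

/- For empty `K`, `berNorm K T` is the junk value `sSup ∅ = 0`. -/
theorem berNorm_le {T : H →L[ℂ] H} {c : ℝ} (hc : 0 ≤ c)
    (h : ∀ k ∈ K, ∀ l ∈ K, ‖inner ℂ (T k) l‖ ≤ c) : berNorm K T ≤ c :=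
  Real.sSup_le (fun _ ⟨k, hk, l, hl, hx⟩ => hx ▸ h k hk l hl) hc

end Berezin

theorem berNorm_adjointA_B_add_general {H : Type*} [NormedAddCommGroup H] [InnerProductSpace ℂ H] [CompleteSpace H]
    (A B : H →L[ℂ] H) (K : Set H) (hK1 : ∀ k ∈ K, ‖k‖ = 1) :
    berNorm K (adjoint A * B + adjoint B * A) ≤ berNum K (adjoint A * A + adjoint B * B) := by
  have hK : Bornology.IsBounded K :=
    isBounded_iff_forall_norm_le.2 ⟨1, fun k hk => (hK1 k hk).le⟩
  have hber : ∀ k ∈ K, ‖A k‖ ^ 2 + ‖B k‖ ^ 2 ≤ berNum K (adjoint A * A + adjoint B * B) :=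
    fun k hk => norm_inner_adjoint_mul_self_add_adjoint_mul_self_apply A B k ▸
      norm_inner_apply_self_le_berNum hK _ hk
  refine berNorm_le (berNum_nonneg _) fun k hk l hl => ?_
  calc ‖inner ℂ ((adjoint A * B + adjoint B * A) k) l‖
      = ‖inner ℂ (B k) (A l) + inner ℂ (A k) (B l)‖ := by
        rw [inner_adjoint_mul_add_adjoint_mul_apply]
    _ ≤ (‖B k‖ ^ 2 + ‖A l‖ ^ 2 + ‖A k‖ ^ 2 + ‖B l‖ ^ 2) / 2 := norm_inner_add_inner_le _ _ _ _
    _ ≤ berNum K (adjoint A * A + adjoint B * B) := by linarith [hber k hk, hber l hl]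

theorem berNorm_adjointA_B_add {H : Type*} [NormedAddCommGroup H] [InnerProductSpace ℂ H] [CompleteSpace H]
    (A B : H →L[ℂ] H) (K : Set H) (hK : K.Nonempty) (hK1 : ∀ k ∈ K, ‖k‖ = 1) :
    berNorm K (adjoint A * B + adjoint B * A) ≤ berNum K (adjoint A * A + adjoint B * B) :=
  berNorm_adjointA_B_add_general A B K hK1
end

section
/- Let A, B be bounded linear operators on a complex Hilbert space H, K a nonempty set of unit vectors, α ∈ [0,1], ber(T)=sup_{k∈K}|⟨T k,k⟩|, ‖T‖_ber=sup_{k,l∈K}|⟨T k,l⟩|. Then ‖α A + (1−α) B‖_ber² ≤ ber(α² A*A + (1−α)² B*B) + 2 α (1−α) ber(B*A). -/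
/-!
For `k, l ∈ K`, Cauchy–Schwarz gives `|⟪T k, l⟫| ≤ ‖T k‖`, so it suffices to bound
`‖T k‖²` for `T = α A + (1 - α) B` and `k ∈ K`. Expanding the square,
`‖T k‖² = Re ⟪(α² A*A + (1 - α)² B*B) k, k⟫ + 2 α (1 - α) Re ⟪B*A k, k⟫`,
and since `α (1 - α) ≥ 0` each real part is bounded by the corresponding Berezin number.
-/

open ContinuousLinearMap

section

variable {H : Type*} [NormedAddCommGroup H] [InnerProductSpace ℂ H] {K : Set H}

theorem norm_inner_apply_le_berNum (hK1 : ∀ k ∈ K, ‖k‖ ≤ 1) (T : H →L[ℂ] H) {k : H}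
    (hk : k ∈ K) : ‖(inner ℂ (T k) k : ℂ)‖ ≤ berNum K T := by
  refine le_csSup ⟨‖T‖, ?_⟩ ⟨k, hk, rfl⟩
  rintro x ⟨j, hj, rfl⟩
  calc ‖(inner ℂ (T j) j : ℂ)‖ ≤ ‖T j‖ * ‖j‖ := norm_inner_le_norm _ _
    _ ≤ (‖T‖ * 1) * 1 :=
        mul_le_mul (T.le_opNorm_of_le (hK1 j hj)) (hK1 j hj) (norm_nonneg _) (by positivity)
    _ = ‖T‖ := by ring

theorem berNorm_nonneg (T : H →L[ℂ] H) : 0 ≤ berNorm K T :=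
  Real.sSup_nonneg fun _ ⟨_, _, _, _, hx⟩ => hx ▸ norm_nonneg _

theorem berNorm_le_of_norm_apply_le (hK : K.Nonempty) (hK1 : ∀ k ∈ K, ‖k‖ ≤ 1)
    {T : H →L[ℂ] H} {c : ℝ} (hT : ∀ k ∈ K, ‖T k‖ ≤ c) : berNorm K T ≤ c := by
  obtain ⟨k₀, hk₀⟩ := hK
  refine csSup_le ⟨_, k₀, hk₀, k₀, hk₀, rfl⟩ ?_
  rintro x ⟨k, hk, l, hl, rfl⟩
  calc ‖(inner ℂ (T k) l : ℂ)‖ ≤ ‖T k‖ * ‖l‖ := norm_inner_le_norm _ _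
    _ ≤ c * 1 := mul_le_mul (hT k hk) (hK1 l hl) (norm_nonneg _) ((norm_nonneg _).trans (hT k hk))
    _ = c := mul_one c

theorem sq_berNorm_le_of_sq_norm_apply_le (hK : K.Nonempty) (hK1 : ∀ k ∈ K, ‖k‖ ≤ 1)
    {T : H →L[ℂ] H} {c : ℝ} (hT : ∀ k ∈ K, ‖T k‖ ^ 2 ≤ c) : berNorm K T ^ 2 ≤ c := by
  obtain ⟨k₀, hk₀⟩ := hK
  have hc : 0 ≤ c := (sq_nonneg _).trans (hT k₀ hk₀)
  rw [← Real.le_sqrt (berNorm_nonneg T) hc]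
  exact berNorm_le_of_norm_apply_le ⟨k₀, hk₀⟩ hK1 fun k hk =>
    (Real.le_sqrt (norm_nonneg _) hc).2 (hT k hk)

variable [CompleteSpace H]

theorem norm_sq_smul_add_smul_apply (A B : H →L[ℂ] H) (a b : ℝ) (k : H) :
    ‖(a • A + b • B) k‖ ^ 2
      = (inner ℂ ((a ^ 2 • (adjoint A * A) + b ^ 2 • (adjoint B * B)) k) k : ℂ).re
        + 2 * a * b * (inner ℂ ((adjoint B * A) k) k : ℂ).re := by
  have hA : (inner ℂ ((adjoint A * A) k) k : ℂ).re = ‖A k‖ ^ 2 :=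
    (apply_norm_sq_eq_inner_adjoint_left A k).symm
  have hB : (inner ℂ ((adjoint B * B) k) k : ℂ).re = ‖B k‖ ^ 2 :=
    (apply_norm_sq_eq_inner_adjoint_left B k).symm
  have hBA : (inner ℂ ((adjoint B * A) k) k : ℂ) = inner ℂ (A k) (B k) :=
    adjoint_inner_left B k (A k)
  simp only [add_apply, smul_apply, inner_add_left, Complex.add_re, norm_add_sq (𝕜 := ℂ),
    norm_smul, inner_smul_left_eq_smul, inner_smul_right_eq_smul, Complex.smul_re,
    RCLike.re_to_complex, smul_eq_mul, Real.norm_eq_abs, mul_pow, sq_abs, hA, hB, hBA]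
  ring

theorem norm_sq_smul_add_smul_apply_le (A B : H →L[ℂ] H) {a b : ℝ} (hab : 0 ≤ a * b) (k : H) :
    ‖(a • A + b • B) k‖ ^ 2
      ≤ ‖(inner ℂ ((a ^ 2 • (adjoint A * A) + b ^ 2 • (adjoint B * B)) k) k : ℂ)‖
        + 2 * a * b * ‖(inner ℂ ((adjoint B * A) k) k : ℂ)‖ := by
  rw [norm_sq_smul_add_smul_apply]
  exact add_le_add (Complex.re_le_norm _)
    (mul_le_mul_of_nonneg_left (Complex.re_le_norm _) (by linarith))

end

theorem berNorm_convex_comb {H : Type*} [NormedAddCommGroup H] [InnerProductSpace ℂ H] [CompleteSpace H]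
    (A B : H →L[ℂ] H) (α : ℝ) (hα : α ∈ Set.Icc (0 : ℝ) 1) (K : Set H) (hK : K.Nonempty) (hK1 : ∀ k ∈ K, ‖k‖ = 1) :
    (berNorm K (α • A + (1 - α) • B)) ^ 2
      ≤ berNum K ((α ^ 2) • (adjoint A * A) + ((1 - α) ^ 2) • (adjoint B * B))
        + 2 * α * (1 - α) * berNum K (adjoint B * A) := by
  obtain ⟨hα0, hα1⟩ := hα
  have hK1' : ∀ k ∈ K, ‖k‖ ≤ 1 := fun k hk => (hK1 k hk).le
  have hα' : 0 ≤ α * (1 - α) := mul_nonneg hα0 (sub_nonneg.2 hα1)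
  refine sq_berNorm_le_of_sq_norm_apply_le hK hK1' fun k hk => ?_
  refine (norm_sq_smul_add_smul_apply_le A B hα' k).trans (add_le_add ?_ ?_)
  · exact norm_inner_apply_le_berNum hK1' _ hk
  · exact mul_le_mul_of_nonneg_left (norm_inner_apply_le_berNum hK1' _ hk) (by linarith)
end

section
/- Let A, B, C, D be bounded linear operators on a complex Hilbert space H. Then ‖(A*B + C*D)/2‖² ≤ ‖(B*B + D*D)/2‖ · ‖(A*A + C*C)/2‖, where ‖·‖ is the operator norm. -/
open ContinuousLinearMap

local notation "⟪" x ", " y "⟫" => @inner ℂ _ _ x y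

private lemma aux_sum_sq {H : Type*} [NormedAddCommGroup H] [InnerProductSpace ℂ H]
    [CompleteSpace H] (P Q : H →L[ℂ] H) (x : H) :
    ‖P x‖ ^ 2 + ‖Q x‖ ^ 2 ≤ ‖adjoint P * P + adjoint Q * Q‖ * ‖x‖ ^ 2 := by
  have h1 : (‖P x‖ ^ 2 + ‖Q x‖ ^ 2 : ℝ)
      = RCLike.re ⟪(adjoint P * P + adjoint Q * Q) x, x⟫ := by
    rw [← inner_self_eq_norm_sq (𝕜 := ℂ) (P x), ← inner_self_eq_norm_sq (𝕜 := ℂ) (Q x)]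
    simp [mul_apply, add_apply, inner_add_left, adjoint_inner_left]
  rw [h1]
  calc RCLike.re ⟪(adjoint P * P + adjoint Q * Q) x, x⟫
      ≤ ‖(adjoint P * P + adjoint Q * Q) x‖ * ‖x‖ := re_inner_le_norm _ _
    _ ≤ (‖adjoint P * P + adjoint Q * Q‖ * ‖x‖) * ‖x‖ :=
        mul_le_mul_of_nonneg_right (le_opNorm _ _) (norm_nonneg _)
    _ = ‖adjoint P * P + adjoint Q * Q‖ * ‖x‖ ^ 2 := by ring

private lemma aux_cs (a b c d : ℝ) (ha : 0 ≤ a) (hb : 0 ≤ b) (hc : 0 ≤ c) (hd : 0 ≤ d) :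
    a * c + b * d ≤ Real.sqrt (a ^ 2 + b ^ 2) * Real.sqrt (c ^ 2 + d ^ 2) := by
  rw [← Real.sqrt_mul (by positivity)]
  rw [Real.le_sqrt (by positivity) (by positivity)]
  nlinarith [sq_nonneg (a * d - b * c)]

theorem opNorm_mixed_schwarz_sum {H : Type*} [NormedAddCommGroup H] [InnerProductSpace ℂ H] [CompleteSpace H]
    (A B C D : H →L[ℂ] H) :
    ‖(2 : ℂ)⁻¹ • (adjoint A * B + adjoint C * D)‖ ^ 2
      ≤ ‖(2 : ℂ)⁻¹ • (adjoint B * B + adjoint D * D)‖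
        * ‖(2 : ℂ)⁻¹ • (adjoint A * A + adjoint C * C)‖ := by
  set T := adjoint A * B + adjoint C * D with hT
  set M := adjoint B * B + adjoint D * D with hM
  set N := adjoint A * A + adjoint C * C with hN
  have hMnn : (0:ℝ) ≤ ‖M‖ := norm_nonneg _
  have hNnn : (0:ℝ) ≤ ‖N‖ := norm_nonneg _
  have key : ∀ x : H, ‖T x‖ ≤ Real.sqrt (‖M‖ * ‖N‖) * ‖x‖ := by
    intro x
    have hTx : (‖T x‖ ^ 2 : ℝ)
        = RCLike.re (⟪B x, A (T x)⟫ + ⟪D x, C (T x)⟫) := by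
      rw [← inner_self_eq_norm_sq (𝕜 := ℂ) (T x)]
      congr 1
      simp [hT, add_apply, mul_apply, inner_add_left, adjoint_inner_left, inner_add_right, -inner_self_eq_norm_sq_to_K]
      ring
    have h2 : (‖T x‖ ^ 2 : ℝ) ≤ ‖B x‖ * ‖A (T x)‖ + ‖D x‖ * ‖C (T x)‖ := by
      rw [hTx]
      calc RCLike.re (⟪B x, A (T x)⟫ + ⟪D x, C (T x)⟫)
          ≤ ‖⟪B x, A (T x)⟫ + ⟪D x, C (T x)⟫‖ := RCLike.re_le_norm _
        _ ≤ ‖⟪B x, A (T x)⟫‖ + ‖⟪D x, C (T x)⟫‖ := norm_add_le _ _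
        _ ≤ ‖B x‖ * ‖A (T x)‖ + ‖D x‖ * ‖C (T x)‖ :=
            add_le_add (norm_inner_le_norm _ _) (norm_inner_le_norm _ _)
    have h3 : (‖T x‖ ^ 2 : ℝ)
        ≤ Real.sqrt (‖B x‖ ^ 2 + ‖D x‖ ^ 2) * Real.sqrt (‖A (T x)‖ ^ 2 + ‖C (T x)‖ ^ 2) :=
      h2.trans (aux_cs _ _ _ _ (norm_nonneg _) (norm_nonneg _) (norm_nonneg _) (norm_nonneg _))
    have hBD := aux_sum_sq B D x
    have hAC := aux_sum_sq A C (T x)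
    have h4 : (‖T x‖ ^ 2 : ℝ)
        ≤ Real.sqrt (‖M‖ * ‖x‖ ^ 2) * Real.sqrt (‖N‖ * ‖T x‖ ^ 2) := by
      refine h3.trans (mul_le_mul ?_ ?_ (Real.sqrt_nonneg _) (Real.sqrt_nonneg _))
      · exact Real.sqrt_le_sqrt (by rw [← hM] at hBD; linarith)
      · exact Real.sqrt_le_sqrt (by rw [← hN] at hAC; linarith)
    have h5 : (‖T x‖ ^ 2 : ℝ)
        ≤ (Real.sqrt ‖M‖ * ‖x‖) * (Real.sqrt ‖N‖ * ‖T x‖) := by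
      rw [Real.sqrt_mul hMnn, Real.sqrt_mul hNnn, Real.sqrt_sq (norm_nonneg x),
        Real.sqrt_sq (norm_nonneg (T x))] at h4
      exact h4
    rcases eq_or_lt_of_le (norm_nonneg (T x)) with h0 | h0
    · rw [← h0]; positivity
    · have := (mul_le_mul_iff_of_pos_right h0).mp (by nlinarith : ‖T x‖ * ‖T x‖ ≤ (Real.sqrt ‖M‖ * ‖x‖ * Real.sqrt ‖N‖) * ‖T x‖)
      calc ‖T x‖ ≤ Real.sqrt ‖M‖ * ‖x‖ * Real.sqrt ‖N‖ := this
        _ = Real.sqrt (‖M‖ * ‖N‖) * ‖x‖ := by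
            rw [Real.sqrt_mul hMnn]; ring
  have hTnorm : ‖T‖ ≤ Real.sqrt (‖M‖ * ‖N‖) :=
    opNorm_le_bound _ (Real.sqrt_nonneg _) key
  have hT2 : ‖T‖ ^ 2 ≤ ‖M‖ * ‖N‖ := by
    have := pow_le_pow_left₀ (norm_nonneg T) hTnorm 2
    rwa [Real.sq_sqrt (by positivity)] at this
  have hhalf : ‖(2 : ℂ)⁻¹‖ = (2⁻¹ : ℝ) := by simp
  rw [norm_smul, norm_smul, norm_smul, hhalf]
  nlinarith [norm_nonneg T]
end

section
/- Let A, B be bounded linear operators on a complex Hilbert space H and α ∈ [0,1]. Then ‖α A + (1−α) B‖² ≤ ‖α² A*A + (1−α)² B*B‖ + 2 α (1−α) w(B*A), where w(T) = sup_{‖x‖=1} |⟨T x, x⟩| is the numerical radius. -/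
/-!
Write `T = α • A + (1 - α) • B` and `X = B† A`. By the C*-identity `‖T‖² = ‖T† T‖`, and expanding,
`T† T = α² A† A + (1 - α)² B† B + α (1 - α) (X + X†)`. The operator `X + X†` is self-adjoint, so its
norm is the supremum of its Rayleigh quotients `2 re ⟪X x, x⟫ / ‖x‖²`, which is at most `2 w(X)`.
-/

open ContinuousLinearMap

noncomputable def numRad {H : Type*} [NormedAddCommGroup H] [InnerProductSpace ℂ H]
    (T : H →L[ℂ] H) : ℝ :=
  sSup {x : ℝ | ∃ y : H, ‖y‖ = 1 ∧ x = ‖(inner ℂ (T y) y : ℂ)‖}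

lemma star_mul_self_smul_add_smul {R : Type*} [Ring R] [StarRing R] [Module ℝ R]
    [StarModule ℝ R] [IsScalarTower ℝ R R] [SMulCommClass ℝ R R] (a b : ℝ) (x y : R) :
    star (a • x + b • y) * (a • x + b • y)
      = (a ^ 2) • (star x * x) + (b ^ 2) • (star y * y)
        + (a * b) • (star y * x + star (star y * x)) := by
  simp only [star_add, star_smul, star_mul, star_star, star_trivial]
  simp only [mul_add, add_mul, smul_mul_smul_comm, smul_add]
  module

lemma re_inner_add_adjoint_apply_self {𝕜 E : Type*} [RCLike 𝕜] [NormedAddCommGroup E]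
    [InnerProductSpace 𝕜 E] [CompleteSpace E] (X : E →L[𝕜] E) (x : E) :
    RCLike.re (inner 𝕜 ((X + adjoint X) x) x) = 2 * RCLike.re (inner 𝕜 (X x) x) := by
  rw [add_apply, inner_add_left, map_add, adjoint_inner_left, inner_re_symm (X x), two_mul]

section NumericalRadius

variable {H : Type*} [NormedAddCommGroup H] [InnerProductSpace ℂ H]

lemma numRad_nonneg (T : H →L[ℂ] H) : 0 ≤ numRad T :=
  Real.sSup_nonneg fun _ ⟨_, _, hx⟩ ↦ hx ▸ norm_nonneg _

lemma norm_inner_apply_self_le_numRad {T : H →L[ℂ] H} {y : H} (hy : ‖y‖ = 1) :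
    ‖(inner ℂ (T y) y : ℂ)‖ ≤ numRad T := by
  refine le_csSup ⟨‖T‖, ?_⟩ ⟨y, hy, rfl⟩
  rintro _ ⟨z, hz, rfl⟩
  calc ‖(inner ℂ (T z) z : ℂ)‖ ≤ ‖T z‖ * ‖z‖ := norm_inner_le_norm _ _
    _ ≤ ‖T‖ * ‖z‖ * ‖z‖ := by gcongr; exact T.le_opNorm z
    _ = ‖T‖ := by rw [hz, mul_one, mul_one]

lemma norm_inner_apply_self_le_numRad_mul (T : H →L[ℂ] H) (x : H) :
    ‖(inner ℂ (T x) x : ℂ)‖ ≤ numRad T * ‖x‖ ^ 2 := by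
  rcases eq_or_ne x 0 with rfl | hx
  · simp
  have hx' : ‖x‖ ≠ 0 := norm_ne_zero_iff.mpr hx
  have hunit : ‖(‖x‖⁻¹ : ℂ) • x‖ = 1 := by simp [norm_smul, hx']
  have h := norm_inner_apply_self_le_numRad (T := T) hunit
  rw [map_smul, inner_smul_left, inner_smul_right, norm_mul, norm_mul] at h
  simp only [map_inv₀, Complex.conj_ofReal, norm_inv, Complex.norm_real, norm_norm] at h
  rwa [← mul_assoc, ← sq, inv_pow, inv_mul_le_iff₀ (by positivity), mul_comm] at h

lemma norm_add_adjoint_le_two_mul_numRad [CompleteSpace H] (X : H →L[ℂ] H) :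
    ‖X + adjoint X‖ ≤ 2 * numRad X := by
  have hsymm : (X + adjoint X).IsSymmetric := by
    simpa only [star_eq_adjoint] using (IsSelfAdjoint.add_star_self X).isSymmetric
  rw [norm_eq_iSup_rayleighQuotient _ hsymm]
  refine ciSup_le fun x ↦ ?_
  rw [rayleighQuotient, reApplyInnerSelf_apply, abs_div, abs_sq]
  refine div_le_of_le_mul₀ (by positivity) (mul_nonneg zero_le_two (numRad_nonneg X)) ?_
  calc |RCLike.re (inner ℂ ((X + adjoint X) x) x : ℂ)|
      = 2 * |RCLike.re (inner ℂ (X x) x : ℂ)| := by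
        rw [re_inner_add_adjoint_apply_self, abs_mul, abs_two]
    _ ≤ 2 * ‖(inner ℂ (X x) x : ℂ)‖ := by gcongr; exact RCLike.abs_re_le_norm _
    _ ≤ 2 * numRad X * ‖x‖ ^ 2 := by
        rw [mul_assoc]; gcongr; exact norm_inner_apply_self_le_numRad_mul X x

end NumericalRadius

theorem opNorm_convex_comb_general {H : Type*} [NormedAddCommGroup H] [InnerProductSpace ℂ H] [CompleteSpace H]
    (A B : H →L[ℂ] H) (α : ℝ) (hα : α ∈ Set.Icc (0 : ℝ) 1) :
    ‖α • A + (1 - α) • B‖ ^ 2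
      ≤ ‖(α ^ 2) • (adjoint A * A) + ((1 - α) ^ 2) • (adjoint B * B)‖
        + 2 * α * (1 - α) * numRad (adjoint B * A) := by
  have hc : 0 ≤ α * (1 - α) := mul_nonneg hα.1 (sub_nonneg.mpr hα.2)
  calc ‖α • A + (1 - α) • B‖ ^ 2
      = ‖star (α • A + (1 - α) • B) * (α • A + (1 - α) • B)‖ := by
        rw [sq, CStarRing.norm_star_mul_self]
    _ ≤ ‖(α ^ 2) • (adjoint A * A) + ((1 - α) ^ 2) • (adjoint B * B)‖
        + α * (1 - α) * ‖adjoint B * A + adjoint (adjoint B * A)‖ := by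
        rw [star_mul_self_smul_add_smul, ← norm_smul_of_nonneg hc]
        simpa only [star_eq_adjoint] using norm_add_le _ _
    _ ≤ ‖(α ^ 2) • (adjoint A * A) + ((1 - α) ^ 2) • (adjoint B * B)‖
        + α * (1 - α) * (2 * numRad (adjoint B * A)) := by
        gcongr; exact norm_add_adjoint_le_two_mul_numRad _
    _ = _ := by ring

theorem opNorm_convex_comb {H : Type*} [NormedAddCommGroup H] [InnerProductSpace ℂ H] [CompleteSpace H] [Nontrivial H]
    (A B : H →L[ℂ] H) (α : ℝ) (hα : α ∈ Set.Icc (0 : ℝ) 1) :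
    ‖α • A + (1 - α) • B‖ ^ 2
      ≤ ‖(α ^ 2) • (adjoint A * A) + ((1 - α) ^ 2) • (adjoint B * B)‖
        + 2 * α * (1 - α) * numRad (adjoint B * A) :=
  opNorm_convex_comb_general A B α hα
end

section
/- Let A be a bounded linear operator on a complex Hilbert space H and let x, y ∈ H. For every α ∈ [0,1], |⟨A x, y⟩|² ≤ ⟨|A|^{2α} x, x⟩ · ⟨|A*|^{2(1−α)} y, y⟩, where |A| = (A*A)^{1/2} and |A*| = (A A*)^{1/2}. -/
/-!
For `ε > 0` the operator `B = (AA* + ε)^(-(1-α)/2)` is invertible with inverse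
`C = (AA* + ε)^((1-α)/2)`, so `⟪Ax, y⟫ = ⟪BAx, Cy⟫` and Cauchy–Schwarz applies. Because
`A* f(AA*) = f(A*A) A*` for continuous `f`, we get `‖BAx‖² = ⟪A*A (A*A + ε)^(α-1) x, x⟫`,
which is at most `⟪(A*A)^α x, x⟫` since `t (t + ε)^(α-1) ≤ t^α`, while
`‖Cy‖² = ⟪(AA* + ε)^(1-α) y, y⟫` tends to `⟪(AA*)^(1-α) y, y⟫` as `ε → 0`.
-/

open ContinuousLinearMap Polynomial Filter Topology
open scoped InnerProductSpace

theorem Polynomial.exists_seq_tendstoUniformlyOn_eval {K : Set ℝ} (hK : IsCompact K)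
    {f : ℝ → ℝ} (hf : ContinuousOn f K) :
    ∃ P : ℕ → ℝ[X], TendstoUniformlyOn (fun n t => (P n).eval t) f atTop K := by
  have : CompactSpace K := isCompact_iff_compactSpace.mp hK
  have hnear (n : ℕ) : ∃ P : ℝ[X], ∀ t ∈ K, dist (f t) (P.eval t) < 1 / (n + 1) := by
    obtain ⟨⟨g, hg⟩, hP⟩ :=
      ContinuousMap.exists_mem_subalgebra_near_continuous_of_separatesPoints
        (polynomialFunctions K) (polynomialFunctions_separatesPoints K) (K.domRestrict f)
        hf.domRestrict (1 / (n + 1)) (by positivity)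
    obtain ⟨P, _, rfl⟩ := hg
    exact ⟨P, fun t ht => by simpa [abs_sub_comm, Real.dist_eq] using hP ⟨t, ht⟩⟩
  choose P hP using hnear
  refine ⟨P, Metric.tendstoUniformlyOn_iff.mpr fun ε hε => ?_⟩
  obtain ⟨N, hN⟩ := exists_nat_one_div_lt hε
  filter_upwards [eventually_ge_atTop N] with n hn t ht
  refine (hP n t ht).trans (lt_of_le_of_lt ?_ hN)
  gcongr

theorem SemiconjBy.aeval {R A : Type*} [CommSemiring R] [Semiring A] [Algebra R A] {a p q : A}
    (h : SemiconjBy a p q) (P : R[X]) : SemiconjBy a (aeval p P) (aeval q P) := by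
  induction P using Polynomial.induction_on' with
  | add P Q hP hQ => simpa only [map_add] using hP.add_right hQ
  | monomial n r =>
    simpa only [aeval_monomial] using
      SemiconjBy.mul_right (Algebra.commute_algebraMap_right r a) (h.pow_right n)

theorem SemiconjBy.cfc_real {A : Type*} [Ring A] [StarRing A] [Algebra ℝ A] [TopologicalSpace A]
    [ContinuousFunctionalCalculus ℝ A IsSelfAdjoint] [IsTopologicalRing A] [T2Space A]
    {a p q : A} (h : SemiconjBy a p q) (f : ℝ → ℝ)
    (hf : ContinuousOn f (spectrum ℝ p ∪ spectrum ℝ q)) (hp : IsSelfAdjoint p)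
    (hq : IsSelfAdjoint q) : SemiconjBy a (cfc f p) (cfc f q) := by
  obtain ⟨P, hP⟩ := Polynomial.exists_seq_tendstoUniformlyOn_eval
    ((ContinuousFunctionalCalculus.isCompact_spectrum p).union
      (ContinuousFunctionalCalculus.isCompact_spectrum q)) hf
  have tendsto_aeval {b : A} (hb : IsSelfAdjoint b)
      (hsub : spectrum ℝ b ⊆ spectrum ℝ p ∪ spectrum ℝ q) :
      Tendsto (fun n => Polynomial.aeval b (P n)) atTop (𝓝 (cfc f b)) := by
    simpa only [cfc_polynomial _ b hb] using
      tendsto_cfc_fun (hP.mono hsub) (Eventually.of_forall fun n => (P n).continuousOn)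
  have hleft := (tendsto_aeval hp Set.subset_union_left).const_mul a
  simp only [(h.aeval _).eq] at hleft
  exact tendsto_nhds_unique hleft ((tendsto_aeval hq Set.subset_union_right).mul_const a)

section CStarAlgebra
variable {A : Type*} [CStarAlgebra A]

theorem star_mul_cfc_mul_star_mul_eq_cfc (a : A) {f : ℝ → ℝ}
    (hf : ContinuousOn f (spectrum ℝ (star a * a) ∪ spectrum ℝ (a * star a))) :
    star a * cfc f (a * star a) * a = cfc (fun t => f t * t) (star a * a) := by
  have hsemi : SemiconjBy (star a) (a * star a) (star a * a) := by
    simp only [SemiconjBy, mul_assoc]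
  rw [(hsemi.cfc_real f (by rwa [Set.union_comm]) (.mul_star_self a) (.star_mul_self a)).eq,
    mul_assoc, cfc_mul f (fun t => t) (star a * a) (hf.mono Set.subset_union_left),
    cfc_id' ℝ (star a * a)]

theorem tendsto_cfc_comp_add_const {a : A} (ha : IsSelfAdjoint a) {f : ℝ → ℝ}
    (hf : Continuous f) :
    Tendsto (fun ε : ℝ => cfc (fun t => f (t + ε)) a) (𝓝 0) (𝓝 (cfc f a)) := by
  have hshift (ε : ℝ) : cfc (fun t => f (t + ε)) a = cfc f (a + algebraMap ℝ A ε) := by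
    rw [cfc_comp' f (· + ε) a, cfc_add_const ε (fun t => t) a, cfc_id' ℝ a]
  have hcont : Continuous fun ε : ℝ => cfc f (a + algebraMap ℝ A ε) :=
    Continuous.cfc_of_mem_nhdsSet f (s := Set.univ) Filter.univ_mem (by fun_prop)
      (fun ε => ha.add (.algebraMap A (.all ε))) hf.continuousOn
  simpa [hshift] using hcont.tendsto 0

end CStarAlgebra

theorem Real.rpow_div_two_sq {x : ℝ} (hx : 0 ≤ x) (y : ℝ) : (x ^ (y / 2)) ^ 2 = x ^ y := by
  rw [← Real.rpow_mul_natCast hx]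
  norm_num

theorem Real.add_rpow_neg_mul_le {t ε β : ℝ} (ht : 0 ≤ t) (hε : 0 ≤ ε) (hβ : 0 ≤ β) :
    (t + ε) ^ (-β) * t ≤ t ^ (1 - β) := by
  rcases ht.eq_or_lt with rfl | ht
  · simpa using Real.rpow_nonneg le_rfl (1 - β)
  calc (t + ε) ^ (-β) * t ≤ t ^ (-β) * t :=
        mul_le_mul_of_nonneg_right
          (Real.rpow_le_rpow_of_nonpos ht (by linarith) (by linarith)) ht.le
    _ = t ^ (1 - β) := by rw [← Real.rpow_add_one ht.ne']; ring_nf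

namespace ContinuousLinearMap

variable {H : Type*} [NormedAddCommGroup H] [InnerProductSpace ℂ H]

theorem re_inner_apply_le_of_le {S T : H →L[ℂ] H} (h : S ≤ T) (v : H) :
    (⟪S v, v⟫_ℂ).re ≤ (⟪T v, v⟫_ℂ).re := by
  have := ((le_def S T).mp h).re_inner_nonneg_left v
  rwa [sub_apply, inner_sub_left, map_sub, sub_nonneg] at this

variable [CompleteSpace H]

theorem re_inner_cfc_nonneg (a : H →L[ℂ] H) {f : ℝ → ℝ}
    (hf : ∀ t ∈ spectrum ℝ a, 0 ≤ f t) (v : H) : 0 ≤ (⟪cfc f a v, v⟫_ℂ).re :=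
  ((nonneg_iff_isPositive _).mp (cfc_nonneg hf)).re_inner_nonneg_left v

theorem norm_cfc_apply_sq {a : H →L[ℂ] H} (ha : IsSelfAdjoint a) {f : ℝ → ℝ}
    (hf : ContinuousOn f (spectrum ℝ a)) (v : H) :
    ‖cfc f a v‖ ^ 2 = (⟪cfc (fun t => f t ^ 2) a v, v⟫_ℂ).re := by
  have hsymm : ⟪cfc f a (cfc f a v), v⟫_ℂ = ⟪cfc f a v, cfc f a v⟫_ℂ :=
    (cfc_predicate f a : IsSelfAdjoint (cfc f a)).isSymmetric _ _
  rw [cfc_pow f 2 a, pow_two (cfc f a), mul_apply_eq_comp, hsymm, inner_self_eq_norm_sq_to_K]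
  norm_cast

theorem spectrum_adjoint_mul_self_subset_Ici (T : H →L[ℂ] H) :
    spectrum ℝ (adjoint T * T) ⊆ Set.Ici 0 := fun _ ht =>
  spectrum_nonneg_of_nonneg (star_eq_adjoint T ▸ star_mul_self_nonneg T) ht

theorem spectrum_mul_adjoint_subset_Ici (T : H →L[ℂ] H) :
    spectrum ℝ (T * adjoint T) ⊆ Set.Ici 0 := fun _ ht =>
  spectrum_nonneg_of_nonneg (star_eq_adjoint T ▸ mul_star_self_nonneg T) ht

theorem norm_inner_sq_le_of_mul_eq_one (T : H →L[ℂ] H) (x y : H)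
    {g h : ℝ → ℝ} (hg : ContinuousOn g (Set.Ici 0)) (hh : ContinuousOn h (Set.Ici 0))
    (hgh : ∀ t ≥ 0, g t * h t = 1) :
    ‖⟪T x, y⟫_ℂ‖ ^ 2 ≤ (⟪cfc (fun t => g t ^ 2 * t) (adjoint T * T) x, x⟫_ℂ).re
      * (⟪cfc (fun t => h t ^ 2) (T * adjoint T) y, y⟫_ℂ).re := by
  have hQ : IsSelfAdjoint (T * adjoint T) := (isPositive_self_comp_adjoint T).isSelfAdjoint
  have hQ0 := T.spectrum_mul_adjoint_subset_Ici
  have hinv : cfc g (T * adjoint T) * cfc h (T * adjoint T) = 1 := by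
    rw [← cfc_mul g h _ (hg.mono hQ0) (hh.mono hQ0), cfc_congr fun t ht => hgh t (hQ0 ht),
      cfc_const_one ℝ _]
  have hinner :
      ⟪T x, y⟫_ℂ = ⟪cfc g (T * adjoint T) (T x), cfc h (T * adjoint T) y⟫_ℂ := by
    rw [← adjoint_inner_right (cfc g _), IsSelfAdjoint.adjoint_eq (cfc_predicate g _),
      ← mul_apply_eq_comp, hinv, one_apply_eq_self]
  have hleft : ‖cfc g (T * adjoint T) (T x)‖ ^ 2
      = (⟪cfc (fun t => g t ^ 2 * t) (adjoint T * T) x, x⟫_ℂ).re := by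
    have hconj := star_mul_cfc_mul_star_mul_eq_cfc T (f := fun t => g t ^ 2)
      ((hg.mono (Set.union_subset T.spectrum_adjoint_mul_self_subset_Ici hQ0)).pow 2)
    rw [star_eq_adjoint] at hconj
    rw [norm_cfc_apply_sq hQ (hg.mono hQ0), ← adjoint_inner_left T, ← mul_apply_eq_comp,
      ← mul_apply_eq_comp, hconj]
  calc ‖⟪T x, y⟫_ℂ‖ ^ 2
      ≤ (‖cfc g (T * adjoint T) (T x)‖ * ‖cfc h (T * adjoint T) y‖) ^ 2 := by
        rw [hinner]
        gcongr
        exact norm_inner_le_norm _ _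
    _ = _ := by rw [mul_pow, hleft, norm_cfc_apply_sq hQ (hh.mono hQ0)]

theorem norm_inner_sq_le_cfc_rpow_add (T : H →L[ℂ] H) (x y : H) {α ε : ℝ}
    (hα0 : 0 ≤ α) (hα1 : α ≤ 1) (hε : 0 < ε) :
    ‖⟪T x, y⟫_ℂ‖ ^ 2 ≤ (⟪cfc (fun t : ℝ => t ^ α) (adjoint T * T) x, x⟫_ℂ).re
      * (⟪cfc (fun t : ℝ => (t + ε) ^ (1 - α)) (T * adjoint T) y, y⟫_ℂ).re := by
  have hcont (c : ℝ) : ContinuousOn (fun t : ℝ => (t + ε) ^ c) (Set.Ici 0) := fun t ht =>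
    ((continuous_add_const ε).continuousAt.rpow_const
      (.inl (by simp only [Set.mem_Ici] at ht; positivity))).continuousWithinAt
  have hsq (t : ℝ) (ht : 0 ≤ t) (c : ℝ) : ((t + ε) ^ (c / 2)) ^ 2 = (t + ε) ^ c :=
    Real.rpow_div_two_sq (by positivity) c
  have hinv (t : ℝ) (ht : 0 ≤ t) :
      (t + ε) ^ (-(1 - α) / 2) * (t + ε) ^ ((1 - α) / 2) = 1 := by
    rw [← Real.rpow_add (by positivity), neg_div, neg_add_cancel, Real.rpow_zero]
  have hbound := T.norm_inner_sq_le_of_mul_eq_one x y (hcont _) (hcont _) hinv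
  have hP0 := T.spectrum_adjoint_mul_self_subset_Ici
  have hQ0 := T.spectrum_mul_adjoint_subset_Ici
  rw [cfc_congr fun t ht => hsq t (hQ0 ht) (1 - α)] at hbound
  refine hbound.trans (mul_le_mul_of_nonneg_right (re_inner_apply_le_of_le ?_ x)
    (re_inner_cfc_nonneg _ (fun t ht => Real.rpow_nonneg (add_nonneg (hQ0 ht) hε.le) _) y))
  refine cfc_mono (fun t ht => ?_) ((hcont _).pow 2 |>.mul continuousOn_id |>.mono hP0)
    ((Real.continuous_rpow_const hα0).continuousOn)
  rw [hsq t (hP0 ht)]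
  simpa using Real.add_rpow_neg_mul_le (hP0 ht) hε.le (sub_nonneg.mpr hα1)

end ContinuousLinearMap

theorem mixed_cauchy_schwarz {H : Type*} [NormedAddCommGroup H] [InnerProductSpace ℂ H] [CompleteSpace H]
    (A : H →L[ℂ] H) (x y : H) (α : ℝ) (hα : α ∈ Set.Icc (0 : ℝ) 1) :
    ‖(inner ℂ (A x) y : ℂ)‖ ^ 2
      ≤ ((inner ℂ ((cfc (fun t : ℝ => t ^ α) (adjoint A * A)) x) x : ℂ)).re
        * ((inner ℂ ((cfc (fun t : ℝ => t ^ (1 - α)) (A * adjoint A)) y) y : ℂ)).re := by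
  obtain ⟨hα0, hα1⟩ := hα
  have hQ : IsSelfAdjoint (A * adjoint A) := (isPositive_self_comp_adjoint A).isSelfAdjoint
  have hlim : Tendsto
      (fun ε : ℝ => (⟪cfc (fun t : ℝ => (t + ε) ^ (1 - α)) (A * adjoint A) y, y⟫_ℂ).re)
      (𝓝[>] 0) (𝓝 (⟪cfc (fun t : ℝ => t ^ (1 - α)) (A * adjoint A) y, y⟫_ℂ).re) :=
    ((by fun_prop : Continuous fun S : H →L[ℂ] H => (⟪S y, y⟫_ℂ).re).tendsto _ |>.comp
      (tendsto_cfc_comp_add_const hQ (Real.continuous_rpow_const (sub_nonneg.mpr hα1)))).mono_left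
      nhdsWithin_le_nhds
  exact ge_of_tendsto (hlim.const_mul _) (eventually_nhdsWithin_of_forall fun ε hε =>
    A.norm_inner_sq_le_cfc_rpow_add x y hα0 hα1 hε)
end

section
/- Let A be a positive bounded linear operator on a complex Hilbert space H, x a unit vector, and r ≥ 1 a real number. Then ⟨A x, x⟩^r ≤ ⟨A^r x, x⟩, where A^r is defined by the continuous functional calculus. -/
/-! The tangent line of the convex function `t ↦ t ^ r` at `s = re ⟪A x, x⟫` lies below it on
the spectrum of `A`. Monotonicity of the continuous functional calculus turns this into the
operator inequality `s ^ r + r s ^ (r - 1) (A - s) ≤ A ^ r`, and applying the vector state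
`T ↦ re ⟪T x, x⟫` (which sends `1` to `1`) leaves exactly `s ^ r ≤ re ⟪A ^ r x, x⟫`. -/

open ContinuousLinearMap

open scoped InnerProductSpace

theorem ConvexOn.add_mul_sub_le_of_hasDerivWithinAt {S : Set ℝ} {f : ℝ → ℝ} {x y f' : ℝ}
    (hf : ConvexOn ℝ S f) (hx : x ∈ S) (hy : y ∈ S) (hf' : HasDerivWithinAt f f' S x) :
    f x + f' * (y - x) ≤ f y := by
  rcases lt_trichotomy x y with hxy | rfl | hyx
  · have hslope := hf.le_slope_of_hasDerivWithinAt hx hy hxy hf'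
    rw [slope_def_field, le_div_iff₀ (sub_pos.2 hxy)] at hslope
    linarith
  · simp
  · have hslope := hf.slope_le_of_hasDerivWithinAt hy hx hyx hf'
    rw [slope_def_field, div_le_iff₀ (sub_pos.2 hyx)] at hslope
    linarith

section

variable {H : Type*} [NormedAddCommGroup H] [InnerProductSpace ℂ H]

namespace ContinuousLinearMap

theorem re_inner_le_re_inner_of_le {S T : H →L[ℂ] H} (h : S ≤ T) (x : H) :
    (⟪S x, x⟫_ℂ).re ≤ (⟪T x, x⟫_ℂ).re := by
  have hpos := ((le_def S T).1 h).re_inner_nonneg_left x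
  rw [sub_apply, inner_sub_left] at hpos
  simpa using hpos

theorem re_inner_algebraMap_add_smul_apply (a b : ℝ) (A : H →L[ℂ] H) {x : H} (hx : ‖x‖ = 1) :
    (⟪(algebraMap ℝ (H →L[ℂ] H) a + b • A) x, x⟫_ℂ).re = a + b * (⟪A x, x⟫_ℂ).re := by
  simp [Algebra.algebraMap_eq_smul_one, hx]

end ContinuousLinearMap

variable [CompleteSpace H]

theorem IsSelfAdjoint.add_mul_re_inner_le_re_inner_cfc {A : H →L[ℂ] H} (hA : IsSelfAdjoint A)
    {f : ℝ → ℝ} (hf : ContinuousOn f (spectrum ℝ A)) {a b : ℝ}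
    (hab : ∀ t ∈ spectrum ℝ A, a + b * t ≤ f t) {x : H} (hx : ‖x‖ = 1) :
    a + b * (⟪A x, x⟫_ℂ).re ≤ (⟪cfc f A x, x⟫_ℂ).re := by
  have hle : algebraMap ℝ (H →L[ℂ] H) a + b • A ≤ cfc f A := by
    rw [← cfc_const_mul_id b A hA, ← cfc_const_add a (fun t => b * t) A]
    exact cfc_mono hab
  rw [← re_inner_algebraMap_add_smul_apply a b A hx]
  exact re_inner_le_re_inner_of_le hle x

theorem ConvexOn.map_re_inner_le_re_inner_cfc {A : H →L[ℂ] H} (hA : IsSelfAdjoint A)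
    {S : Set ℝ} {f : ℝ → ℝ} {f' : ℝ} (hf : ConvexOn ℝ S f) (hfc : ContinuousOn f (spectrum ℝ A))
    (hAS : spectrum ℝ A ⊆ S) {x : H} (hx : ‖x‖ = 1) (hxS : (⟪A x, x⟫_ℂ).re ∈ S)
    (hf' : HasDerivWithinAt f f' S (⟪A x, x⟫_ℂ).re) :
    f (⟪A x, x⟫_ℂ).re ≤ (⟪cfc f A x, x⟫_ℂ).re := by
  set s := (⟪A x, x⟫_ℂ).re
  have htangent : ∀ t ∈ spectrum ℝ A, (f s - f' * s) + f' * t ≤ f t := fun t ht => by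
    linarith [hf.add_mul_sub_le_of_hasDerivWithinAt hxS (hAS ht) hf']
  linarith [hA.add_mul_re_inner_le_re_inner_cfc hfc htangent hx]

end

theorem mccarthy_inequality {H : Type*} [NormedAddCommGroup H] [InnerProductSpace ℂ H] [CompleteSpace H]
    (A : H →L[ℂ] H) (hA : A.IsPositive) (x : H) (hx : ‖x‖ = 1) (r : ℝ) (hr : 1 ≤ r) :
    ((inner ℂ (A x) x : ℂ)).re ^ r ≤ ((inner ℂ ((cfc (fun t : ℝ => t ^ r) A) x) x : ℂ)).re := by
  have hspec : spectrum ℝ A ⊆ Set.Ici 0 := fun t ht =>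
    spectrum_nonneg_of_nonneg ((nonneg_iff_isPositive A).2 hA) ht
  have hs : 0 ≤ (inner ℂ (A x) x : ℂ).re := by simpa using hA.re_inner_nonneg_left x
  exact (convexOn_rpow hr).map_re_inner_le_re_inner_cfc hA.isSelfAdjoint
    (Real.continuous_rpow_const (by linarith)).continuousOn hspec hx hs
    (Real.hasDerivAt_rpow_const (Or.inr hr)).hasDerivWithinAt
end

section
/- Let A, B be bounded linear operators on a complex Hilbert space H, K a nonempty set of unit vectors, ber(T)=sup_{k∈K}|⟨T k,k⟩|, ‖T‖_ber=sup_{k,l∈K}|⟨T k,l⟩|. Then ‖(A+B)/2‖_ber² ≤ ber((A*A + I)/2) · ber((B B* + I)/2). -/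
open ContinuousLinearMap

theorem berNorm_half_add_sq {H : Type*} [NormedAddCommGroup H] [InnerProductSpace ℂ H] [CompleteSpace H]
    (A B : H →L[ℂ] H) (K : Set H) (hK : K.Nonempty) (hK1 : ∀ k ∈ K, ‖k‖ = 1) :
    (berNorm K ((2 : ℂ)⁻¹ • (A + B))) ^ 2
      ≤ berNum K ((2 : ℂ)⁻¹ • (adjoint A * A + 1)) * berNum K ((2 : ℂ)⁻¹ • (B * adjoint B + 1)) := by
  obtain ⟨k₀, hk₀⟩ := hK
  set T₁ := (2 : ℂ)⁻¹ • (adjoint A * A + 1) with hT₁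
  set T₂ := (2 : ℂ)⁻¹ • (B * adjoint B + 1) with hT₂
  set C₁ := berNum K T₁ with hC₁def
  set C₂ := berNum K T₂ with hC₂def
  have hbdd : ∀ T : H →L[ℂ] H,
      BddAbove {x : ℝ | ∃ k ∈ K, x = ‖(inner ℂ (T k) k : ℂ)‖} := by
    intro T
    refine ⟨‖T‖, ?_⟩
    rintro x ⟨k, hk, rfl⟩
    calc ‖(inner ℂ (T k) k : ℂ)‖ ≤ ‖T k‖ * ‖k‖ := norm_inner_le_norm _ _
      _ ≤ ‖T‖ * ‖k‖ * ‖k‖ := by gcongr; exact T.le_opNorm k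
      _ = ‖T‖ := by rw [hK1 k hk]; ring
  have hval₁ : ∀ k ∈ K, ‖(inner ℂ (T₁ k) k : ℂ)‖ = (‖A k‖ ^ 2 + 1) / 2 := by
    intro k hk
    have hk1 := hK1 k hk
    have h : (inner ℂ (T₁ k) k : ℂ) = (((‖A k‖ ^ 2 + 1) / 2 : ℝ) : ℂ) := by
      rw [hT₁]
      simp only [ContinuousLinearMap.smul_apply, ContinuousLinearMap.add_apply,
        ContinuousLinearMap.mul_apply, ContinuousLinearMap.one_apply, inner_smul_left,
        inner_add_left, adjoint_inner_left, inner_self_eq_norm_sq_to_K, hk1, map_inv₀, map_div₀, map_one, map_ofNat]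
      push_cast
      ring_nf
      norm_num
    rw [h, Complex.norm_real, Real.norm_of_nonneg (by positivity)]
  have hval₂ : ∀ l ∈ K, ‖(inner ℂ (T₂ l) l : ℂ)‖ = (‖adjoint B l‖ ^ 2 + 1) / 2 := by
    intro l hl
    have hl1 := hK1 l hl
    have h : (inner ℂ (T₂ l) l : ℂ) = (((‖adjoint B l‖ ^ 2 + 1) / 2 : ℝ) : ℂ) := by
      rw [hT₂]
      have hB : ∀ u : H, (inner ℂ (B u) l : ℂ) = inner ℂ u (adjoint B l) := fun u =>
        (adjoint_inner_right B u l).symm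
      simp only [ContinuousLinearMap.smul_apply, ContinuousLinearMap.add_apply,
        ContinuousLinearMap.mul_apply, ContinuousLinearMap.one_apply, inner_smul_left,
        inner_add_left, hB, inner_self_eq_norm_sq_to_K, hl1, map_inv₀, map_div₀, map_one, map_ofNat]
      push_cast
      ring_nf
      norm_num
    rw [h, Complex.norm_real, Real.norm_of_nonneg (by positivity)]
  have hC₁ : ∀ k ∈ K, (‖A k‖ ^ 2 + 1) / 2 ≤ C₁ := fun k hk =>
    le_csSup (hbdd T₁) ⟨k, hk, (hval₁ k hk).symm⟩
  have hC₂ : ∀ l ∈ K, (‖adjoint B l‖ ^ 2 + 1) / 2 ≤ C₂ := fun l hl =>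
    le_csSup (hbdd T₂) ⟨l, hl, (hval₂ l hl).symm⟩
  have h1nn : 0 ≤ C₁ := le_trans (by positivity) (hC₁ k₀ hk₀)
  have h2nn : 0 ≤ C₂ := le_trans (by positivity) (hC₂ k₀ hk₀)
  have key : ∀ k ∈ K, ∀ l ∈ K,
      ‖(inner ℂ (((2 : ℂ)⁻¹ • (A + B)) k) l : ℂ)‖ ≤ Real.sqrt (C₁ * C₂) := by
    intro k hk l hl
    set a := ‖A k‖ with ha
    set b := ‖adjoint B l‖ with hb
    have hAB : ‖(inner ℂ ((A + B) k) l : ℂ)‖ ≤ a + b := by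
      have h1 : ‖(inner ℂ (A k) l : ℂ)‖ ≤ a := by
        calc ‖(inner ℂ (A k) l : ℂ)‖ ≤ ‖A k‖ * ‖l‖ := norm_inner_le_norm _ _
          _ = a := by rw [hK1 l hl]; ring
      have h2 : ‖(inner ℂ (B k) l : ℂ)‖ ≤ b := by
        have hB : (inner ℂ (B k) l : ℂ) = inner ℂ k (adjoint B l) :=
          (adjoint_inner_right B k l).symm
        calc ‖(inner ℂ (B k) l : ℂ)‖ = ‖(inner ℂ k (adjoint B l) : ℂ)‖ := by rw [hB]
          _ ≤ ‖k‖ * ‖adjoint B l‖ := norm_inner_le_norm _ _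
          _ = b := by rw [hK1 k hk]; ring
      calc ‖(inner ℂ ((A + B) k) l : ℂ)‖
          = ‖(inner ℂ (A k) l : ℂ) + (inner ℂ (B k) l : ℂ)‖ := by
            simp [ContinuousLinearMap.add_apply, inner_add_left]
        _ ≤ ‖(inner ℂ (A k) l : ℂ)‖ + ‖(inner ℂ (B k) l : ℂ)‖ := norm_add_le _ _
        _ ≤ a + b := add_le_add h1 h2
    have hx : ‖(inner ℂ (((2 : ℂ)⁻¹ • (A + B)) k) l : ℂ)‖ = 2⁻¹ * ‖(inner ℂ ((A + B) k) l : ℂ)‖ := by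
      rw [ContinuousLinearMap.smul_apply, inner_smul_left, norm_mul]
      simp [inner_add_left]
    rw [hx]
    have hsq : (2⁻¹ * ‖(inner ℂ ((A + B) k) l : ℂ)‖) ^ 2 ≤ C₁ * C₂ := by
      have hnorm_nn : (0:ℝ) ≤ ‖(inner ℂ ((A + B) k) l : ℂ)‖ := norm_nonneg _
      have e1 : (2⁻¹ * ‖(inner ℂ ((A + B) k) l : ℂ)‖) ^ 2 ≤ ((a + b) / 2) ^ 2 := by
        have : 2⁻¹ * ‖(inner ℂ ((A + B) k) l : ℂ)‖ ≤ (a + b) / 2 := by nlinarith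
        nlinarith
      have e2 : ((a + b) / 2) ^ 2 ≤ (a ^ 2 + 1) / 2 * ((b ^ 2 + 1) / 2) := by
        nlinarith [sq_nonneg (a * b - 1), norm_nonneg (A k), norm_nonneg (adjoint B l)]
      have e3 : (a ^ 2 + 1) / 2 * ((b ^ 2 + 1) / 2) ≤ C₁ * C₂ :=
        mul_le_mul (hC₁ k hk) (hC₂ l hl) (by positivity) h1nn
      linarith
    calc 2⁻¹ * ‖(inner ℂ ((A + B) k) l : ℂ)‖
        = Real.sqrt ((2⁻¹ * ‖(inner ℂ ((A + B) k) l : ℂ)‖) ^ 2) :=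
          (Real.sqrt_sq (by positivity)).symm
      _ ≤ Real.sqrt (C₁ * C₂) := Real.sqrt_le_sqrt hsq
  have hsup : berNorm K ((2 : ℂ)⁻¹ • (A + B)) ≤ Real.sqrt (C₁ * C₂) := by
    apply Real.sSup_le
    · rintro x ⟨k, hk, l, hl, rfl⟩
      exact key k hk l hl
    · exact Real.sqrt_nonneg _
  have hnn : 0 ≤ berNorm K ((2 : ℂ)⁻¹ • (A + B)) := by
    apply Real.sSup_nonneg
    rintro x ⟨k, hk, l, hl, rfl⟩
    exact norm_nonneg _
  calc (berNorm K ((2 : ℂ)⁻¹ • (A + B))) ^ 2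
      ≤ (Real.sqrt (C₁ * C₂)) ^ 2 := by
        exact pow_le_pow_left₀ hnn hsup 2
    _ = C₁ * C₂ := Real.sq_sqrt (mul_nonneg h1nn h2nn)
end
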